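/- Suppose the matrices A, B_w, B_d, C_v, D_vw, D_vd, C_e, D_ew, D_ed, a symmetric positive semidefinite P, a scalar λ ≥ 0, and a symmetric M satisfy the dissipativity LMI condition with X = 0 (the zero supply-rate matrix). Then for every admissible trajectory (x, w, d, v, e) of the linear system whose uncertainty signals satisfy the static integral quadratic constraint defined by M, the storage function is nonincreasing along the trajectory: x(T)ᵀ P x(T) ≤ x(0)ᵀ P x(0) for every T ≥ 0. -/

import Mathlib

/-! The LMI, evaluated at `(x t, w t, d t)`, says that the derivative of the storage
`x ⬝ᵥ P *ᵥ x` along the trajectory plus `λ` times the IQC integrand is nonpositive.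
Integrating over `[0, T]`, the drop of the storage is at least `λ` times the IQC integral,
which is nonnegative. -/

open Matrix

/-- Negative semidefiniteness of a real matrix: `zᵀ N z ≤ 0` for all `z`. -/
def IsNegSemidef {m : Type*} [Fintype m] (N : Matrix m m ℝ) : Prop :=
  ∀ z : m → ℝ, z ⬝ᵥ N *ᵥ z ≤ 0

/-- The dissipativity LMI condition
`[[AᵀP + PA, P Bw, P Bd], [Bwᵀ P, 0, 0], [Bdᵀ P, 0, 0]] + λ Hᵀ M H − Gᵀ X G ⪯ 0` with
`H = [[Cv, Dvw, Dvd], [0, I, 0]]` and `G = [[0, 0, I], [Ce, Dew, Ded]]`. -/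
def DissLMI {ιn ιw ιd ιv ιe : Type*} [Fintype ιn] [Fintype ιw] [Fintype ιd]
    [Fintype ιv] [Fintype ιe] [DecidableEq ιw] [DecidableEq ιd]
    (A : Matrix ιn ιn ℝ) (Bw : Matrix ιn ιw ℝ) (Bd : Matrix ιn ιd ℝ)
    (Cv : Matrix ιv ιn ℝ) (Dvw : Matrix ιv ιw ℝ) (Dvd : Matrix ιv ιd ℝ)
    (Ce : Matrix ιe ιn ℝ) (Dew : Matrix ιe ιw ℝ) (Ded : Matrix ιe ιd ℝ)
    (P : Matrix ιn ιn ℝ) (lam : ℝ)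
    (M : Matrix (ιv ⊕ ιw) (ιv ⊕ ιw) ℝ)
    (X : Matrix (ιd ⊕ ιe) (ιd ⊕ ιe) ℝ) : Prop :=
  let H : Matrix (ιv ⊕ ιw) (ιn ⊕ (ιw ⊕ ιd)) ℝ :=
    fromBlocks Cv (fromCols Dvw Dvd) 0 (fromCols 1 0)
  let G : Matrix (ιd ⊕ ιe) (ιn ⊕ (ιw ⊕ ιd)) ℝ :=
    fromBlocks 0 (fromCols 0 1) Ce (fromCols Dew Ded)
  let F0 : Matrix (ιn ⊕ (ιw ⊕ ιd)) (ιn ⊕ (ιw ⊕ ιd)) ℝ :=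
    fromBlocks (Aᵀ * P + P * A) (fromCols (P * Bw) (P * Bd))
      (fromRows (Bwᵀ * P) (Bdᵀ * P)) 0
  IsNegSemidef (F0 + lam • (Hᵀ * M * H) - Gᵀ * X * G)

open Set

section Calculus

variable {ι κ : Type*} [Fintype ι] {u v : ℝ → ι → ℝ} {u' v' : ι → ℝ} {s : Set ℝ} {t : ℝ}

theorem HasDerivWithinAt.dotProduct (hu : HasDerivWithinAt u u' s t)
    (hv : HasDerivWithinAt v v' s t) :
    HasDerivWithinAt (fun τ => u τ ⬝ᵥ v τ) (u' ⬝ᵥ v t + u t ⬝ᵥ v') s t := by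
  simp only [_root_.dotProduct, ← Finset.sum_add_distrib]
  exact HasDerivWithinAt.fun_sum fun i _ =>
    (hasDerivWithinAt_pi.1 hu i).mul (hasDerivWithinAt_pi.1 hv i)

theorem HasDerivWithinAt.matrix_mulVec (Q : Matrix κ ι ℝ) (hu : HasDerivWithinAt u u' s t) :
    HasDerivWithinAt (fun τ => Q *ᵥ u τ) (Q *ᵥ u') s t :=
  hasDerivWithinAt_pi.2 fun k => by
    simpa [Matrix.mulVec, dotProduct] using (hasDerivWithinAt_const t s (Q k)).dotProduct hu

end Calculus

@[fun_prop]
theorem ContinuousOn.pi_sumElim {X α β R : Type*} [TopologicalSpace X] [TopologicalSpace R]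
    {f : X → α → R} {g : X → β → R} {s : Set X} (hf : ContinuousOn f s) (hg : ContinuousOn g s) :
    ContinuousOn (fun p => Sum.elim (f p) (g p)) s :=
  Homeomorph.sumArrowHomeomorphProdArrow.symm.continuous.comp_continuousOn (hf.prodMk hg)

theorem le_of_hasDerivWithinAt_of_add_mul_nonpos {φ g ψ : ℝ → ℝ} {a b c : ℝ} (hab : a ≤ b)
    (hc : 0 ≤ c) (hφ : ∀ t ∈ Icc a b, HasDerivWithinAt φ (g t) (Icc a b) t)
    (hg : ContinuousOn g (Icc a b)) (hψ : ContinuousOn ψ (Icc a b))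
    (hgψ : ∀ t ∈ Icc a b, g t + c * ψ t ≤ 0) (hψint : 0 ≤ ∫ t in a..b, ψ t) :
    φ b ≤ φ a := by
  have hg_int := hg.intervalIntegrable_of_Icc (μ := MeasureTheory.volume) hab
  have hψ_int := hψ.intervalIntegrable_of_Icc (μ := MeasureTheory.volume) hab
  have : φ b - φ a ≤ -(c * ∫ t in a..b, ψ t) := calc
    φ b - φ a = ∫ t in a..b, g t :=
      (intervalIntegral.integral_eq_sub_of_hasDeriv_right_of_le hab
        (fun t ht => (hφ t ht).continuousWithinAt)
        (fun t ht => ((hφ t (Ioo_subset_Icc_self ht)).hasDerivAt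
          (Icc_mem_nhds ht.1 ht.2)).hasDerivWithinAt) hg_int).symm
    _ ≤ ∫ t in a..b, -(c * ψ t) :=
      intervalIntegral.integral_mono_on hab hg_int (hψ_int.const_mul c).neg
        fun t ht => by linarith [hgψ t ht]
    _ = -(c * ∫ t in a..b, ψ t) := by
      rw [intervalIntegral.integral_neg, intervalIntegral.integral_const_mul]
  linarith [mul_nonneg hc hψint]

section LMI

variable {ιn ιw ιd ιv ιe : Type*} [Fintype ιn] [Fintype ιw] [Fintype ιd]
  {A : Matrix ιn ιn ℝ} {Bw : Matrix ιn ιw ℝ} {Bd : Matrix ιn ιd ℝ}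
  {Cv : Matrix ιv ιn ℝ} {Dvw : Matrix ιv ιw ℝ} {Dvd : Matrix ιv ιd ℝ}
  {Ce : Matrix ιe ιn ℝ} {Dew : Matrix ιe ιw ℝ} {Ded : Matrix ιe ιd ℝ}
  {P : Matrix ιn ιn ℝ} {lam : ℝ} {M : Matrix (ιv ⊕ ιw) (ιv ⊕ ιw) ℝ}

theorem fromBlocks_storage_dotProduct_mulVec (ξ : ιn → ℝ) (ω : ιw → ℝ) (δ : ιd → ℝ) :
    Sum.elim ξ (Sum.elim ω δ) ⬝ᵥ
      fromBlocks (Aᵀ * P + P * A) (fromCols (P * Bw) (P * Bd))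
        (fromRows (Bwᵀ * P) (Bdᵀ * P)) 0 *ᵥ Sum.elim ξ (Sum.elim ω δ) =
      (A *ᵥ ξ + Bw *ᵥ ω + Bd *ᵥ δ) ⬝ᵥ P *ᵥ ξ + ξ ⬝ᵥ P *ᵥ (A *ᵥ ξ + Bw *ᵥ ω + Bd *ᵥ δ) := by
  simp only [fromBlocks_mulVec, fromCols_mulVec_sumElim, fromRows_mulVec,
    sumElim_dotProduct_sumElim, add_mulVec, mulVec_add, dotProduct_add, add_dotProduct,
    ← mulVec_mulVec, dotProduct_mulVec _ Aᵀ, dotProduct_mulVec _ Bwᵀ, dotProduct_mulVec _ Bdᵀ,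
    vecMul_transpose, zero_mulVec, add_zero, Sum.elim_comp_inl, Sum.elim_comp_inr]
  ring

theorem fromBlocks_iqc_mulVec [DecidableEq ιw] (ξ : ιn → ℝ) (ω : ιw → ℝ) (δ : ιd → ℝ) :
    (fromBlocks Cv (fromCols Dvw Dvd) 0 (fromCols 1 0) :
        Matrix (ιv ⊕ ιw) (ιn ⊕ (ιw ⊕ ιd)) ℝ) *ᵥ Sum.elim ξ (Sum.elim ω δ) =
      Sum.elim (Cv *ᵥ ξ + Dvw *ᵥ ω + Dvd *ᵥ δ) ω := by
  simp [fromBlocks_mulVec, add_assoc]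

theorem DissLMI.storage_rate_add_mul_iqc_nonpos [Fintype ιv] [Fintype ιe] [DecidableEq ιw]
    [DecidableEq ιd] (h : DissLMI A Bw Bd Cv Dvw Dvd Ce Dew Ded P lam M 0)
    (ξ : ιn → ℝ) (ω : ιw → ℝ) (δ : ιd → ℝ) :
    (A *ᵥ ξ + Bw *ᵥ ω + Bd *ᵥ δ) ⬝ᵥ P *ᵥ ξ + ξ ⬝ᵥ P *ᵥ (A *ᵥ ξ + Bw *ᵥ ω + Bd *ᵥ δ) +
      lam * (Sum.elim (Cv *ᵥ ξ + Dvw *ᵥ ω + Dvd *ᵥ δ) ω ⬝ᵥ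
        M *ᵥ Sum.elim (Cv *ᵥ ξ + Dvw *ᵥ ω + Dvd *ᵥ δ) ω) ≤ 0 := by
  simpa only [Matrix.mul_zero, Matrix.zero_mul, sub_zero, add_mulVec, dotProduct_add,
    smul_mulVec, dotProduct_smul, smul_eq_mul, ← mulVec_mulVec, dotProduct_mulVec _ _ᵀ,
    vecMul_transpose, fromBlocks_iqc_mulVec, fromBlocks_storage_dotProduct_mulVec]
    using h (Sum.elim ξ (Sum.elim ω δ))

end LMI

theorem statement3_general {n nw nd nv ne : ℕ}
    (A : Matrix (Fin n) (Fin n) ℝ) (Bw : Matrix (Fin n) (Fin nw) ℝ)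
    (Bd : Matrix (Fin n) (Fin nd) ℝ)
    (Cv : Matrix (Fin nv) (Fin n) ℝ) (Dvw : Matrix (Fin nv) (Fin nw) ℝ)
    (Dvd : Matrix (Fin nv) (Fin nd) ℝ)
    (Ce : Matrix (Fin ne) (Fin n) ℝ) (Dew : Matrix (Fin ne) (Fin nw) ℝ)
    (Ded : Matrix (Fin ne) (Fin nd) ℝ)
    (P : Matrix (Fin n) (Fin n) ℝ) (lam : ℝ)
    (M : Matrix (Fin nv ⊕ Fin nw) (Fin nv ⊕ Fin nw) ℝ)
    (hlam : 0 ≤ lam)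
    (hLMI : DissLMI A Bw Bd Cv Dvw Dvd Ce Dew Ded P lam M 0)
    (x : ℝ → Fin n → ℝ) (w : ℝ → Fin nw → ℝ) (d : ℝ → Fin nd → ℝ)
    (v : ℝ → Fin nv → ℝ)
    (hw : ContinuousOn w (Set.Ici 0)) (hd : ContinuousOn d (Set.Ici 0))
    (hx : ∀ t ∈ Set.Ici (0:ℝ),
      HasDerivWithinAt x (A *ᵥ x t + Bw *ᵥ w t + Bd *ᵥ d t) (Set.Ici 0) t)
    (hv : ∀ t, v t = Cv *ᵥ x t + Dvw *ᵥ w t + Dvd *ᵥ d t)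
    (hIQC : ∀ T, 0 ≤ T → 0 ≤ ∫ t in (0:ℝ)..T,
      Sum.elim (v t) (w t) ⬝ᵥ M *ᵥ Sum.elim (v t) (w t)) :
    ∀ T, 0 ≤ T → x T ⬝ᵥ P *ᵥ x T ≤ x 0 ⬝ᵥ P *ᵥ x 0 := by
  intro T hT
  obtain rfl : v = _ := funext hv
  have hsub : Icc 0 T ⊆ Ici (0 : ℝ) := Icc_subset_Ici_self
  have hxc : ContinuousOn x (Icc 0 T) := fun t ht => (hx t ht.1).continuousWithinAt.mono hsub
  have hwc := hw.mono hsub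
  have hdc := hd.mono hsub
  exact le_of_hasDerivWithinAt_of_add_mul_nonpos hT hlam
    (fun t ht => (((hx t ht.1).dotProduct ((hx t ht.1).matrix_mulVec P)).mono hsub))
    (by fun_prop) (by fun_prop) (fun t _ => hLMI.storage_rate_add_mul_iqc_nonpos _ _ _) (hIQC T hT)

/-- the dissipativity LMI with `X = 0` implies that the storage
function `xᵀ P x` is nonincreasing along every admissible trajectory whose
uncertainty signals satisfy the static IQC defined by `M`. -/
theorem statement3 {n nw nd nv ne : ℕ}
    (A : Matrix (Fin n) (Fin n) ℝ) (Bw : Matrix (Fin n) (Fin nw) ℝ)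
    (Bd : Matrix (Fin n) (Fin nd) ℝ)
    (Cv : Matrix (Fin nv) (Fin n) ℝ) (Dvw : Matrix (Fin nv) (Fin nw) ℝ)
    (Dvd : Matrix (Fin nv) (Fin nd) ℝ)
    (Ce : Matrix (Fin ne) (Fin n) ℝ) (Dew : Matrix (Fin ne) (Fin nw) ℝ)
    (Ded : Matrix (Fin ne) (Fin nd) ℝ)
    (P : Matrix (Fin n) (Fin n) ℝ) (lam : ℝ)
    (M : Matrix (Fin nv ⊕ Fin nw) (Fin nv ⊕ Fin nw) ℝ)
    (hP : P.PosSemidef) (hlam : 0 ≤ lam) (hM : M.IsSymm)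
    (hLMI : DissLMI A Bw Bd Cv Dvw Dvd Ce Dew Ded P lam M 0)
    (x : ℝ → Fin n → ℝ) (w : ℝ → Fin nw → ℝ) (d : ℝ → Fin nd → ℝ)
    (v : ℝ → Fin nv → ℝ) (e : ℝ → Fin ne → ℝ)
    (hw : ContinuousOn w (Set.Ici 0)) (hd : ContinuousOn d (Set.Ici 0))
    (hx : ∀ t ∈ Set.Ici (0:ℝ),
      HasDerivWithinAt x (A *ᵥ x t + Bw *ᵥ w t + Bd *ᵥ d t) (Set.Ici 0) t)
    (hv : ∀ t, v t = Cv *ᵥ x t + Dvw *ᵥ w t + Dvd *ᵥ d t)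
    (he : ∀ t, e t = Ce *ᵥ x t + Dew *ᵥ w t + Ded *ᵥ d t)
    (hIQC : ∀ T, 0 ≤ T → 0 ≤ ∫ t in (0:ℝ)..T,
      Sum.elim (v t) (w t) ⬝ᵥ M *ᵥ Sum.elim (v t) (w t)) :
    ∀ T, 0 ≤ T → x T ⬝ᵥ P *ᵥ x T ≤ x 0 ⬝ᵥ P *ᵥ x 0 :=
  statement3_general A Bw Bd Cv Dvw Dvd Ce Dew Ded P lam M hlam hLMI x w d v hw hd hx hv hIQC
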